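/- Let f : A → ℝⁿ and g : B → ℝⁿ be continuous maps on compact spaces A, B with f(A) ∩ g(B) = ∅, and let P : ℝⁿ → ℝⁿ be the orthogonal projection onto the subspace {x : x_{m+1} = ⋯ = x_n = 0}. If P(f(A)) ∩ P(g(B)) = ∅, then the maps H_t(x,y) = (f^t(x) - g^t(y))/‖f^t(x) - g^t(y)‖, where f^t multiplies the last n-m coordinates of f by (1-t) and similarly for g^t, form a well-defined homotopy on A × B × [0,1] from ξ_{fg}(x,y) = (f(x)-g(y))/‖f(x)-g(y)‖ to a map taking values in the subsphere S^{m-1} = {v ∈ S^{n-1} : v_{m+1} = ⋯ = v_n = 0}. -/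

import Mathlib

/-- Scale the last `n - m` coordinates by `1 - t`. -/
noncomputable def scaleTail (n m : ℕ) (t : ℝ) (v : EuclideanSpace ℝ (Fin n)) :
    EuclideanSpace ℝ (Fin n) :=
  WithLp.toLp 2 (fun i : Fin n => if (i : ℕ) < m then v i else (1 - t) * v i)

/-!
Writing `P = scaleTail n m 1` for the projection, `P ∘ scaleTail n m t = P` for every `t`. Hence a
coincidence `f^t x = g^t y` would give `P (f x) = P (g y)`; so `f^t x - g^t y` never vanishes and
its normalization is continuous in `(x, y, t)`.
-/

section scaleTail

variable {n m : ℕ}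

@[simp]
lemma scaleTail_apply (t : ℝ) (v : EuclideanSpace ℝ (Fin n)) (i : Fin n) :
    scaleTail n m t v i = if (i : ℕ) < m then v i else (1 - t) * v i :=
  rfl

@[simp]
lemma scaleTail_zero (v : EuclideanSpace ℝ (Fin n)) : scaleTail n m 0 v = v := by
  ext i; simp

@[simp]
lemma scaleTail_one_scaleTail (t : ℝ) (v : EuclideanSpace ℝ (Fin n)) :
    scaleTail n m 1 (scaleTail n m t v) = scaleTail n m 1 v := by
  ext i; by_cases hi : (i : ℕ) < m <;> simp [hi]

lemma scaleTail_ne_of_scaleTail_one_ne {v w : EuclideanSpace ℝ (Fin n)}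
    (h : scaleTail n m 1 v ≠ scaleTail n m 1 w) (t : ℝ) :
    scaleTail n m t v ≠ scaleTail n m t w := fun ht =>
  h (by simpa using congrArg (scaleTail n m 1) ht)

@[fun_prop]
lemma Continuous.scaleTail {X : Type*} [TopologicalSpace X] {t : X → ℝ}
    {v : X → EuclideanSpace ℝ (Fin n)} (ht : Continuous t) (hv : Continuous v) :
    Continuous fun x => _root_.scaleTail n m (t x) (v x) := by
  refine (PiLp.continuous_toLp 2 _).comp (continuous_pi fun i => ?_)
  have hvi : Continuous fun x => v x i := (EuclideanSpace.proj i).continuous.comp hv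
  split_ifs
  · exact hvi
  · exact (continuous_const.sub ht).mul hvi

end scaleTail

theorem projection_homotopy_general (n m : ℕ)
    (A B : Type*) [TopologicalSpace A] [TopologicalSpace B]
    (f : A → EuclideanSpace ℝ (Fin n)) (g : B → EuclideanSpace ℝ (Fin n))
    (hf : Continuous f) (hg : Continuous g)
    (hproj : ∀ x y, scaleTail n m 1 (f x) ≠ scaleTail n m 1 (g y)) :
    (∀ (t : ℝ), t ∈ Set.Icc (0:ℝ) 1 → ∀ x y, scaleTail n m t (f x) ≠ scaleTail n m t (g y)) ∧
    ∃ H : A × B × unitInterval → EuclideanSpace ℝ (Fin n),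
      (∀ x y t, H (x, y, t) =
        ‖scaleTail n m t (f x) - scaleTail n m t (g y)‖⁻¹ •
          (scaleTail n m t (f x) - scaleTail n m t (g y))) ∧
      Continuous H ∧
      (∀ x y, H (x, y, 0) = ‖f x - g y‖⁻¹ • (f x - g y)) ∧
      (∀ x y, ‖H (x, y, 1)‖ = 1 ∧ ∀ i : Fin n, m ≤ (i : ℕ) → H (x, y, 1) i = 0) := by
  set D : A × B × unitInterval → EuclideanSpace ℝ (Fin n) := fun p =>
    scaleTail n m p.2.2 (f p.1) - scaleTail n m p.2.2 (g p.2.1)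
  have hD_ne : ∀ p, D p ≠ 0 := fun p =>
    sub_ne_zero.mpr (scaleTail_ne_of_scaleTail_one_ne (hproj p.1 p.2.1) _)
  have hD : Continuous D := by unfold D; fun_prop
  refine ⟨fun t _ x y => scaleTail_ne_of_scaleTail_one_ne (hproj x y) t,
    fun p => ‖D p‖⁻¹ • D p, fun _ _ _ => rfl,
    (hD.norm.inv₀ fun p => norm_ne_zero_iff.mpr (hD_ne p)).smul hD,
    fun x y => by simp [D], fun x y => ⟨norm_smul_inv_norm (hD_ne _), fun i hi => ?_⟩⟩
  simp [D, Nat.not_lt.mpr hi]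

theorem projection_homotopy (n m : ℕ) (hmn : m < n)
    (A B : Type*) [TopologicalSpace A] [TopologicalSpace B]
    [CompactSpace A] [CompactSpace B]
    (f : A → EuclideanSpace ℝ (Fin n)) (g : B → EuclideanSpace ℝ (Fin n))
    (hf : Continuous f) (hg : Continuous g)
    (hdisj : ∀ x y, f x ≠ g y)
    (hproj : ∀ x y, scaleTail n m 1 (f x) ≠ scaleTail n m 1 (g y)) :
    (∀ (t : ℝ), t ∈ Set.Icc (0:ℝ) 1 → ∀ x y, scaleTail n m t (f x) ≠ scaleTail n m t (g y)) ∧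
    ∃ H : A × B × unitInterval → EuclideanSpace ℝ (Fin n),
      (∀ x y t, H (x, y, t) =
        ‖scaleTail n m t (f x) - scaleTail n m t (g y)‖⁻¹ •
          (scaleTail n m t (f x) - scaleTail n m t (g y))) ∧
      Continuous H ∧
      (∀ x y, H (x, y, 0) = ‖f x - g y‖⁻¹ • (f x - g y)) ∧
      (∀ x y, ‖H (x, y, 1)‖ = 1 ∧ ∀ i : Fin n, m ≤ (i : ℕ) → H (x, y, 1) i = 0) :=
  projection_homotopy_general n m A B f g hf hg hproj
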